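/- arXiv:2106.15972 — 3 statements merged into one kernel-verified Lean document; each statement's English description precedes it below -/
import Mathlib

section
/- Operator identity for the exponential-kernel density (Remark 2). Let α∈(0,1), k=α/(1−α), and let f(x,t) = k t e^{−kx−t} W_{1,2}(k x t). Then for all x>0 and t≥0, ∫_0^x (∂f/∂z)(z,t) e^{−k(x−z)} dz = k t e^{−t−kx} Σ_{n=1}^∞ (k t x)^n/(n!(n+1)!) − k e^{−t−kx} Σ_{l=1}^∞ (k t x)^l/(l!)^2. -/
open MeasureTheory Real Set

/-- The Wright function `W_{a,b}(x) = Σ_{j≥0} x^j / (j! Γ(a j + b))`. -/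
noncomputable def wright (a b x : ℝ) : ℝ :=
  ∑' j : ℕ, x ^ j / ((Nat.factorial j : ℝ) * Real.Gamma (a * j + b))

/-- The one-parameter Mittag-Leffler function `E_ν(x) = Σ_{j≥0} x^j / Γ(ν j + 1)`. -/
noncomputable def mlOne (ν x : ℝ) : ℝ :=
  ∑' j : ℕ, x ^ j / Real.Gamma (ν * j + 1)

/-- The two-parameter Mittag-Leffler function `E_{a,b}(x) = Σ_{j≥0} x^j / Γ(a j + b)`. -/
noncomputable def mlTwo (a b x : ℝ) : ℝ :=
  ∑' j : ℕ, x ^ j / Real.Gamma (a * j + b)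

/-- The rising factorial `(γ)_j = γ (γ+1) ⋯ (γ+j-1)`. -/
noncomputable def risingFactorial (γ : ℝ) (j : ℕ) : ℝ :=
  ∏ i ∈ Finset.range j, (γ + i)

/-- The Prabhakar (three-parameter Mittag-Leffler) function
`E^γ_{a,b}(x) = Σ_{j≥0} (γ)_j x^j / (j! Γ(a j + b))`. -/
noncomputable def prabhakar (a b γ x : ℝ) : ℝ :=
  ∑' j : ℕ, risingFactorial γ j * x ^ j / ((Nat.factorial j : ℝ) * Real.Gamma (a * j + b))

/-- The upper incomplete gamma function `Γ(ρ; x) = ∫_x^∞ e^{-w} w^{ρ-1} dw`. -/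
noncomputable def uGamma (ρ x : ℝ) : ℝ :=
  ∫ w in Set.Ioi x, Real.exp (-w) * w ^ (ρ - 1)

/-- `convIter g n` is the `(n+1)`-fold convolution `g^{*(n+1)}` of `g` on `(0,∞)`:
`convIter g 0 = g` and `convIter g (n+1) = g * (convIter g n)`. -/
noncomputable def convIter (g : ℝ → ℝ) : ℕ → ℝ → ℝ
  | 0 => g
  | n + 1 => fun x => ∫ y in (0:ℝ)..x, g (x - y) * convIter g n y


/-!
Writing `f(·, t) = e^{-k·} g` with `g(z) = k t e^{-t} W_{1,2}(k t z)`, the kernel `e^{-k(x-z)}`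
absorbs the exponential factor, so the integral is `e^{-kx} (g(x) - g(0) - k ∫_0^x g)`.
Termwise differentiation gives `W_{1,1}' = W_{1,2}`, which evaluates `∫_0^x g`; the two series
are then the tails of `W_{1,2}(k t x)` and `W_{1,1}(k t x)` after their constant terms `1`.
-/

open scoped Nat ContDiff

def FactorialBounded (c : ℕ → ℝ) : Prop :=
  ∃ C M : ℝ, ∀ j, |c j| ≤ C * M ^ j / j !

def derivCoeffs (c : ℕ → ℝ) (j : ℕ) : ℝ := (j + 1) * c (j + 1)

section FactorialBounded

variable {c : ℕ → ℝ}

theorem FactorialBounded.summable_norm (hc : FactorialBounded c) (y : ℝ) :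
    Summable fun j => ‖c j * y ^ j‖ := by
  obtain ⟨C, M, hCM⟩ := hc
  refine .of_nonneg_of_le (fun j => norm_nonneg _) (fun j => ?_)
    ((Real.summable_pow_div_factorial (M * |y|)).mul_left C)
  calc ‖c j * y ^ j‖ = |c j| * |y| ^ j := by rw [Real.norm_eq_abs, abs_mul, abs_pow]
    _ ≤ C * M ^ j / j ! * |y| ^ j := by gcongr; exact hCM j
    _ = C * ((M * |y|) ^ j / j !) := by ring

theorem FactorialBounded.summable (hc : FactorialBounded c) (y : ℝ) :
    Summable fun j => c j * y ^ j :=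
  (hc.summable_norm y).of_norm

theorem factorialBounded_derivCoeffs (hc : FactorialBounded c) :
    FactorialBounded (derivCoeffs c) := by
  obtain ⟨C, M, hCM⟩ := hc
  refine ⟨C * M, M, fun j => ?_⟩
  calc |derivCoeffs c j| = (j + 1) * |c (j + 1)| := by
        rw [derivCoeffs, abs_mul, abs_of_pos (by positivity)]
    _ ≤ (j + 1) * (C * M ^ (j + 1) / (j + 1) !) := by gcongr; exact hCM _
    _ = C * M * M ^ j / j ! := by rw [Nat.factorial_succ]; push_cast; field_simp; ring

theorem FactorialBounded.hasDerivAt (hc : FactorialBounded c) (y : ℝ) :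
    HasDerivAt (fun z => ∑' j, c j * z ^ j) (∑' j, derivCoeffs c j * y ^ j) y := by
  set R := |y| + 1
  have hy : y ∈ Metric.ball (0 : ℝ) R := by simp [R]
  have hshift :
      (fun z => ∑' j, c j * z ^ j) = fun z => c 0 + ∑' j, c (j + 1) * z ^ (j + 1) := by
    funext z
    rw [(hc.summable z).tsum_eq_zero_add, pow_zero, mul_one]
  have hterm (j : ℕ) (z : ℝ) :
      HasDerivAt (fun w => c (j + 1) * w ^ (j + 1)) (derivCoeffs c j * z ^ j) z := by
    refine ((hasDerivAt_pow (j + 1) z).const_mul (c (j + 1))).congr_deriv ?_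
    rw [derivCoeffs, add_tsub_cancel_right]
    push_cast
    ring
  have hbound (j : ℕ) (z : ℝ) (hz : z ∈ Metric.ball (0 : ℝ) R) :
      ‖derivCoeffs c j * z ^ j‖ ≤ ‖derivCoeffs c j * R ^ j‖ := by
    rw [mem_ball_zero_iff] at hz
    simp only [norm_mul, norm_pow]
    gcongr
    exact hz.le.trans (le_abs_self R)
  rw [hshift]
  exact .const_add _ (hasDerivAt_tsum_of_isPreconnected
    ((factorialBounded_derivCoeffs hc).summable_norm R) Metric.isOpen_ball
    (convex_ball 0 R).isPreconnected (fun j z _ => hterm j z) hbound hy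
    ((summable_nat_add_iff 1).2 (hc.summable y)) hy)

end FactorialBounded

theorem wright_zero (a b : ℝ) : wright a b 0 = (Gamma b)⁻¹ := by
  rw [wright, tsum_eq_single 0 fun j hj => by simp [hj]]
  simp

noncomputable def wrightCoeff (m j : ℕ) : ℝ := ((j ! : ℝ) * ((j + m) ! : ℝ))⁻¹

theorem wright_one_eq_tsum (m : ℕ) (y : ℝ) :
    wright 1 (m + 1) y = ∑' j, wrightCoeff m j * y ^ j := by
  refine tsum_congr fun j => ?_
  rw [show (1 : ℝ) * j + (m + 1) = ((j + m : ℕ) : ℝ) + 1 by push_cast; ring,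
    Gamma_nat_eq_factorial, wrightCoeff, div_eq_inv_mul, mul_comm]

theorem factorialBounded_wrightCoeff (m : ℕ) : FactorialBounded (wrightCoeff m) := by
  refine ⟨1, 1, fun j => ?_⟩
  rw [one_pow, one_mul, one_div, wrightCoeff, abs_of_pos (by positivity)]
  exact inv_anti₀ (by positivity) (le_mul_of_one_le_right (by positivity)
    (by exact_mod_cast Nat.one_le_iff_ne_zero.2 (Nat.factorial_ne_zero _)))

theorem derivCoeffs_wrightCoeff (m : ℕ) : derivCoeffs (wrightCoeff m) = wrightCoeff (m + 1) := by
  funext j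
  rw [derivCoeffs, wrightCoeff, wrightCoeff, show j + 1 + m = j + (m + 1) by ring,
    Nat.factorial_succ j]
  push_cast
  field_simp

theorem hasDerivAt_wright_one (m : ℕ) (y : ℝ) :
    HasDerivAt (wright 1 (m + 1)) (wright 1 (m + 2) y) y := by
  have h := (factorialBounded_wrightCoeff m).hasDerivAt y
  rw [derivCoeffs_wrightCoeff, ← wright_one_eq_tsum] at h
  convert h using 1
  · exact funext (wright_one_eq_tsum m)
  · push_cast; ring_nf

theorem contDiff_wright_one (m : ℕ) : ContDiff ℝ ∞ (wright 1 (m + 1)) := by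
  suffices h : ∀ n m : ℕ, ContDiff ℝ n (wright 1 (m + 1)) from contDiff_infty.2 (h · m)
  intro n
  induction n with
  | zero =>
    intro m
    rw [Nat.cast_zero, contDiff_zero]
    exact continuous_iff_continuousAt.2 fun y => (hasDerivAt_wright_one m y).continuousAt
  | succ n ih =>
    intro m
    have hderiv : deriv (wright 1 (m + 1)) = wright 1 ((m + 1 : ℕ) + 1) := by
      funext y
      rw [(hasDerivAt_wright_one m y).deriv]
      push_cast; ring_nf
    rw [Nat.cast_succ, contDiff_succ_iff_deriv, hderiv]
    exact ⟨fun y => (hasDerivAt_wright_one m y).differentiableAt, by simp, ih (m + 1)⟩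

theorem wright_one_eq_inv_factorial_add_tsum (m : ℕ) (y : ℝ) :
    wright 1 (m + 1) y =
      (m ! : ℝ)⁻¹ + ∑' n, y ^ (n + 1) / ((n + 1) ! * (n + 1 + m) ! : ℝ) := by
  rw [wright_one_eq_tsum, ((factorialBounded_wrightCoeff m).summable y).tsum_eq_zero_add]
  simp only [wrightCoeff, div_eq_inv_mul]
  simp

theorem integral_mul_wright_one (m : ℕ) (κ x : ℝ) :
    ∫ z in (0 : ℝ)..x, κ * wright 1 (m + 2) (κ * z) =
      wright 1 (m + 1) (κ * x) - (m ! : ℝ)⁻¹ := by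
  have hderiv (z : ℝ) :
      HasDerivAt (fun z => wright 1 (m + 1) (κ * z)) (κ * wright 1 (m + 2) (κ * z)) z :=
    ((hasDerivAt_wright_one m (κ * z)).comp z ((hasDerivAt_id' z).const_mul κ)).congr_deriv
      (by ring)
  have hcont : Continuous fun z => κ * wright 1 (m + 2) (κ * z) := by
    have h := (contDiff_wright_one (m + 1)).continuous
    rw [Nat.cast_succ, add_assoc, one_add_one_eq_two] at h
    fun_prop
  rw [intervalIntegral.integral_eq_sub_of_hasDerivAt (fun z _ => hderiv z)
    (hcont.intervalIntegrable 0 x), mul_zero, wright_zero, Gamma_nat_eq_factorial]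

/-- `caputoFabrizioDeriv k f x` is `^{CF}D_x^α f(x)` with `k = α / (1 - α)`. -/
noncomputable def caputoFabrizioDeriv (k : ℝ) (f : ℝ → ℝ) (x : ℝ) : ℝ :=
  ∫ z in (0 : ℝ)..x, deriv f z * exp (-k * (x - z))

theorem caputoFabrizioDeriv_exp_mul {g : ℝ → ℝ} (hg : ContDiff ℝ 1 g) (k x : ℝ) :
    caputoFabrizioDeriv k (fun w => exp (-(k * w)) * g w) x =
      exp (-(k * x)) * (g x - g 0 - k * ∫ z in (0 : ℝ)..x, g z) := by
  obtain ⟨hdiff, hcont⟩ := contDiff_one_iff_deriv.1 hg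
  have hintegrand (z : ℝ) : deriv (fun w => exp (-(k * w)) * g w) z * exp (-k * (x - z)) =
      exp (-(k * x)) * (deriv g z - k * g z) := by
    have hd : HasDerivAt (fun w => exp (-(k * w)) * g w)
        (exp (-(k * z)) * (deriv g z - k * g z)) z :=
      ((((hasDerivAt_id' z).const_mul k).neg.exp).mul (hdiff z).hasDerivAt).congr_deriv
        (by simp only [Pi.neg_apply]; ring)
    rw [hd.deriv, mul_right_comm, ← exp_add, show -(k * z) + -k * (x - z) = -(k * x) by ring]
  simp_rw [caputoFabrizioDeriv, hintegrand]
  rw [intervalIntegral.integral_const_mul, intervalIntegral.integral_sub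
      (hcont.intervalIntegrable 0 x) ((hg.continuous.intervalIntegrable 0 x).const_mul k),
    intervalIntegral.integral_deriv_eq_sub (fun z _ => hdiff z) (hcont.intervalIntegrable 0 x),
    intervalIntegral.integral_const_mul]

theorem operator_identity_exponential_kernel_general (k : ℝ) (f : ℝ → ℝ → ℝ)
    (hf : ∀ x t : ℝ, f x t = k * t * Real.exp (-k * x - t) * wright 1 2 (k * x * t)) :
    ∀ x : ℝ, 0 < x → ∀ t : ℝ, 0 ≤ t →
      (∫ z in (0:ℝ)..x, deriv (fun w => f w t) z * Real.exp (-k * (x - z))) =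
        k * t * Real.exp (-t - k * x) *
            (∑' n : ℕ, (k * t * x) ^ (n + 1) /
              ((Nat.factorial (n + 1) : ℝ) * (Nat.factorial (n + 2) : ℝ))) -
          k * Real.exp (-t - k * x) *
            (∑' l : ℕ, (k * t * x) ^ (l + 1) / ((Nat.factorial (l + 1) : ℝ)) ^ 2) := by
  intro x _ t _
  set g : ℝ → ℝ := fun z => k * t * exp (-t) * wright 1 2 (k * t * z)
  have hfg : (fun w => f w t) = fun w => exp (-(k * w)) * g w := by
    funext w
    rw [hf, show -k * w - t = -(k * w) + -t by ring, exp_add, show k * w * t = k * t * w by ring]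
    ring
  have hg : ContDiff ℝ 1 g := by
    have h := (contDiff_wright_one 1).of_le (m := 1) (by exact_mod_cast le_top)
    rw [Nat.cast_one, one_add_one_eq_two] at h
    fun_prop
  have hintegral :
      k * ∫ z in (0 : ℝ)..x, g z = k * exp (-t) * (wright 1 1 (k * t * x) - 1) := by
    have h := integral_mul_wright_one 0 (k * t) x
    simp only [Nat.cast_zero, zero_add, Nat.factorial_zero, Nat.cast_one, inv_one] at h
    rw [← h, ← intervalIntegral.integral_const_mul, ← intervalIntegral.integral_const_mul]
    congr 1 with z
    ring
  have hW₁₁ := wright_one_eq_inv_factorial_add_tsum 0 (k * t * x)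
  have hW₁₂ := wright_one_eq_inv_factorial_add_tsum 1 (k * t * x)
  simp only [Nat.cast_zero, Nat.cast_one, zero_add, add_zero, one_add_one_eq_two, add_assoc,
    Nat.factorial_zero, Nat.factorial_one, inv_one, ← sq] at hW₁₁ hW₁₂
  change caputoFabrizioDeriv k (fun w => f w t) x = _
  rw [hfg, caputoFabrizioDeriv_exp_mul hg, hintegral]
  simp only [g, mul_zero]
  rw [hW₁₁, hW₁₂, wright_zero, Gamma_two, show -t - k * x = -(k * x) + -t by ring, exp_add]
  ring

theorem operator_identity_exponential_kernel (α k : ℝ) (hα : α ∈ Set.Ioo (0:ℝ) 1)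
    (hk : k = α / (1 - α)) (f : ℝ → ℝ → ℝ)
    (hf : ∀ x t : ℝ, f x t = k * t * Real.exp (-k * x - t) * wright 1 2 (k * x * t)) :
    ∀ x : ℝ, 0 < x → ∀ t : ℝ, 0 ≤ t →
      (∫ z in (0:ℝ)..x, deriv (fun w => f w t) z * Real.exp (-k * (x - z))) =
        k * t * Real.exp (-t - k * x) *
            (∑' n : ℕ, (k * t * x) ^ (n + 1) /
              ((Nat.factorial (n + 1) : ℝ) * (Nat.factorial (n + 2) : ℝ))) -
          k * Real.exp (-t - k * x) *
            (∑' l : ℕ, (k * t * x) ^ (l + 1) / ((Nat.factorial (l + 1) : ℝ)) ^ 2) :=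
  operator_identity_exponential_kernel_general k f hf
end

section
/- Laplace transform of the incomplete-gamma-kernel density (formula (loc)). Let ρ∈(0,1], k>0, t≥0. Then for every η>0, ∫_0^∞ e^{−ηx} · (e^{−t−kx}/x) Σ_{n=1}^∞ (k^ρ t x^ρ)^n/(n! Γ(ρn)) dx = e^{−t + k^ρ t/(η+k)^ρ} − e^{−t}. -/
/-!
Writing `S(x)` for the series, the integrand is `e^{-t} S(x) x⁻¹ e^{-(η+k)x}`. Each term of the
series is a power `x^{ρ(n+1)-1}` against `e^{-(η+k)x}`, whose integral is a Gamma integral that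
cancels the `Γ(ρ(n+1))` in the denominator; the integrals of the absolute values are summable, so
the series can be integrated termwise, leaving `e^{-t} Σ_{n≥1} r^n / n! = e^{-t}(e^r - 1)` with
`r = k^ρ t / (η+k)^ρ`.
-/

open MeasureTheory Real Set

open scoped Nat

theorem tsum_pow_succ_div_factorial_succ (b : ℝ) :
    ∑' n : ℕ, b ^ (n + 1) / (n + 1)! = exp b - 1 := by
  rw [exp_eq_exp_ℝ, NormedSpace.exp_eq_tsum_div]
  dsimp only
  rw [(summable_pow_div_factorial b).tsum_eq_zero_add]
  simp

section LaplaceTransform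

variable {ρ c : ℝ} (a : ℝ)

theorem mul_rpow_pow_mul_inv {x : ℝ} (hx : 0 < x) (m : ℕ) :
    (a * x ^ ρ) ^ m * x⁻¹ = a ^ m * x ^ (ρ * m - 1) := by
  rw [mul_pow, ← rpow_natCast (x ^ ρ), ← rpow_mul hx.le, rpow_sub hx, rpow_one, div_eq_mul_inv,
    mul_assoc]

theorem integrableOn_mul_rpow_pow_mul_exp_neg_mul_Ioi (hρ : 0 < ρ) (hc : 0 < c) {m : ℕ}
    (hm : 0 < m) :
    IntegrableOn (fun x ↦ (a * x ^ ρ) ^ m * (x⁻¹ * exp (-(c * x)))) (Ioi 0) := by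
  have hρm : 0 < ρ * m := by positivity
  have hGamma : IntegrableOn (fun x ↦ x ^ (ρ * m - 1) * exp (-(c * x))) (Ioi 0) :=
    .of_integral_ne_zero (by rw [integral_rpow_mul_exp_neg_mul_Ioi hρm hc]; positivity)
  refine IntegrableOn.congr_fun (hGamma.const_mul (a ^ m)) (fun x hx ↦ ?_) measurableSet_Ioi
  rw [← mul_assoc, ← mul_rpow_pow_mul_inv a hx, mul_assoc]

theorem integral_mul_rpow_pow_mul_exp_neg_mul_Ioi (hρ : 0 < ρ) (hc : 0 < c) {m : ℕ}
    (hm : 0 < m) :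
    ∫ x in Ioi 0, (a * x ^ ρ) ^ m * (x⁻¹ * exp (-(c * x))) = (a / c ^ ρ) ^ m * Gamma (ρ * m) := by
  have hρm : 0 < ρ * m := by positivity
  calc ∫ x in Ioi 0, (a * x ^ ρ) ^ m * (x⁻¹ * exp (-(c * x)))
      = ∫ x in Ioi 0, a ^ m * (x ^ (ρ * m - 1) * exp (-(c * x))) :=
        setIntegral_congr_fun measurableSet_Ioi fun x hx ↦ by
          rw [← mul_assoc, mul_rpow_pow_mul_inv a hx, mul_assoc]
    _ = a ^ m * ((1 / c) ^ (ρ * m) * Gamma (ρ * m)) := by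
        rw [integral_const_mul, integral_rpow_mul_exp_neg_mul_Ioi hρm hc]
    _ = (a / c ^ ρ) ^ m * Gamma (ρ * m) := by
        rw [rpow_mul (by positivity), rpow_natCast, one_div, inv_rpow hc.le, div_eq_mul_inv,
          mul_pow]
        ring

theorem integral_tsum_mul_rpow_pow_div_mul_exp_neg_mul_Ioi (hρ : 0 < ρ) (hc : 0 < c) :
    ∫ x in Ioi 0, (∑' n : ℕ, (a * x ^ ρ) ^ (n + 1) / ((n + 1)! * Gamma (ρ * (n + 1)))) *
      (x⁻¹ * exp (-(c * x))) = exp (a / c ^ ρ) - 1 := by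
  set F : ℕ → ℝ → ℝ := fun n x ↦
    ((n + 1)! * Gamma (ρ * (n + 1)))⁻¹ * ((a * x ^ ρ) ^ (n + 1) * (x⁻¹ * exp (-(c * x))))
  have hF : ∀ (b : ℝ) (n : ℕ), ∫ x in Ioi 0, ((n + 1)! * Gamma (ρ * (n + 1)))⁻¹ *
      ((b * x ^ ρ) ^ (n + 1) * (x⁻¹ * exp (-(c * x)))) = (b / c ^ ρ) ^ (n + 1) / (n + 1)! := by
    intro b n
    have hGamma : 0 < Gamma (ρ * (n + 1)) := Gamma_pos_of_pos (by positivity)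
    rw [integral_const_mul, integral_mul_rpow_pow_mul_exp_neg_mul_Ioi b hρ hc n.succ_pos]
    push_cast
    field_simp
  have hnorm : ∀ n, ∫ x in Ioi 0, ‖F n x‖ = (|a| / c ^ ρ) ^ (n + 1) / (n + 1)! := by
    intro n
    rw [← hF]
    refine setIntegral_congr_fun measurableSet_Ioi fun x hx ↦ ?_
    have hx : 0 < x := hx
    simp only [F, norm_mul, norm_pow, norm_inv, Real.norm_eq_abs, abs_of_pos hx, abs_exp,
      abs_of_pos (rpow_pos_of_pos hx ρ)]
    rw [Nat.abs_cast, abs_of_pos (Gamma_pos_of_pos (by positivity))]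
  have hint : ∀ n, Integrable (F n) (volume.restrict (Ioi 0)) := fun n ↦
    (integrableOn_mul_rpow_pow_mul_exp_neg_mul_Ioi a hρ hc n.succ_pos).const_mul _
  have hsum : Summable fun n ↦ ∫ x in Ioi 0, ‖F n x‖ := by
    simp_rw [hnorm]
    exact (summable_pow_div_factorial _).comp_injective (add_left_injective 1)
  calc ∫ x in Ioi 0, (∑' n : ℕ, (a * x ^ ρ) ^ (n + 1) / ((n + 1)! * Gamma (ρ * (n + 1)))) *
        (x⁻¹ * exp (-(c * x)))
      = ∫ x in Ioi 0, ∑' n, F n x := by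
        congr 1
        funext x
        rw [← tsum_mul_right]
        exact tsum_congr fun n ↦ by ring
    _ = ∑' n, ∫ x in Ioi 0, F n x := (integral_tsum_of_summable_integral_norm hint hsum).symm
    _ = exp (a / c ^ ρ) - 1 := by
        simp_rw [F, hF]
        exact tsum_pow_succ_div_factorial_succ _

end LaplaceTransform

theorem laplace_incomplete_gamma_kernel_density_general (ρ k t : ℝ) (hρ : ρ ∈ Set.Ioc (0:ℝ) 1)
    (hk : 0 < k) :
    ∀ η : ℝ, 0 < η →
      (∫ x in Set.Ioi (0:ℝ), Real.exp (-η * x) * (Real.exp (-t - k * x) / x *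
        ∑' n : ℕ, (k ^ ρ * t * x ^ ρ) ^ (n + 1) /
          ((Nat.factorial (n + 1) : ℝ) * Real.Gamma (ρ * (n + 1))))) =
      Real.exp (-t + k ^ ρ * t / (η + k) ^ ρ) - Real.exp (-t) := by
  intro η hη
  have hexp : ∀ x : ℝ, exp (-η * x) * exp (-t - k * x) = exp (-t) * exp (-((η + k) * x)) :=
    fun x ↦ by rw [← exp_add, ← exp_add]; ring_nf
  calc _ = ∫ x in Ioi 0, exp (-t) * ((∑' n : ℕ, (k ^ ρ * t * x ^ ρ) ^ (n + 1) /
        ((n + 1)! * Gamma (ρ * (n + 1)))) * (x⁻¹ * exp (-((η + k) * x)))) := by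
        congr 1
        funext x
        rw [div_eq_mul_inv, ← mul_assoc, ← mul_assoc, hexp]
        ring
    _ = exp (-t) * (exp (k ^ ρ * t / (η + k) ^ ρ) - 1) := by
        rw [integral_const_mul,
          integral_tsum_mul_rpow_pow_div_mul_exp_neg_mul_Ioi _ hρ.1 (by positivity)]
    _ = _ := by rw [mul_sub, ← exp_add, mul_one]

theorem laplace_incomplete_gamma_kernel_density (ρ k t : ℝ) (hρ : ρ ∈ Set.Ioc (0:ℝ) 1)
    (hk : 0 < k) (ht : 0 ≤ t) :
    ∀ η : ℝ, 0 < η →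
      (∫ x in Set.Ioi (0:ℝ), Real.exp (-η * x) * (Real.exp (-t - k * x) / x *
        ∑' n : ℕ, (k ^ ρ * t * x ^ ρ) ^ (n + 1) /
          ((Nat.factorial (n + 1) : ℝ) * Real.Gamma (ρ * (n + 1))))) =
      Real.exp (-t + k ^ ρ * t / (η + k) ^ ρ) - Real.exp (-t) :=
  laplace_incomplete_gamma_kernel_density_general ρ k t hρ hk
end

section
/- Laplace transform of the two-point distributed incomplete-gamma-kernel density (Corollary 15). Let k>0, 0<ρ₁<ρ₂<1, q₁,q₂∈[0,1] with q₁+q₂=1, t≥0, and define f(x,t) = (e^{−t−kx}/x) Σ_{l=0}^∞ ((q₁ k^{ρ₁} x^{ρ₁} t)^l/l!) · W_{ρ₂, ρ₁ l}(q₂ k^{ρ₂} x^{ρ₂} t) for x>0. Then for every η>0, ∫_0^∞ e^{−ηx} f(x,t) dx = e^{−t + (q₁ k^{ρ₁}/(η+k)^{ρ₁} + q₂ k^{ρ₂}/(η+k)^{ρ₂}) t} − e^{−t}. -/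
/-!
Expanding the Wright functions, `e^{-ηx} f(x,t)` is `e^{-t}` times a double series over `(l, j)`
whose terms are multiples `u^l v^j / (l! j! Γ(s))` of the gamma kernels `x^{s-1} e^{-(η+k)x}`, where
`s = ρ₁ l + ρ₂ j`, `u = q₁ k^{ρ₁} t` and `v = q₂ k^{ρ₂} t`. A kernel integrates to `Γ(s)/(η+k)^s`,
which cancels the `1/Γ(s)`, so the integrated double series is the product of two exponential
series, `exp(u/(η+k)^{ρ₁} + v/(η+k)^{ρ₂})`, less its `(0, 0)` term. Integrating term by term is
Fubini: the series of integrals of absolute values is the same computation with `|u|` and `|v|`,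
and its finiteness also gives the a.e. absolute convergence of the double series needed to
rearrange it into the iterated series defining `f`.
-/

open MeasureTheory Real Set

open scoped Nat

theorem ae_summable_of_summable_integral_norm {α E ι : Type*} [MeasurableSpace α]
    {μ : Measure α} [NormedAddCommGroup E] [CompleteSpace E] [Countable ι] {F : ι → α → E}
    (hF_int : ∀ i, Integrable (F i) μ) (hF_sum : Summable fun i ↦ ∫ a, ‖F i a‖ ∂μ) :
    ∀ᵐ a ∂μ, Summable fun i ↦ F i a := by
  refine (summable_norm_of_tsum_eLpNorm_ne_top le_rfl (fun i ↦ (hF_int i).1) ?_).mono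
    fun a ha ↦ ha.of_norm
  simp_rw [eLpNorm_one_eq_lintegral_enorm, ← ofReal_integral_norm_eq_lintegral_enorm (hF_int _)]
  rw [← ENNReal.ofReal_tsum_of_nonneg (fun i ↦ integral_nonneg fun a ↦ norm_nonneg _) hF_sum]
  exact ENNReal.ofReal_ne_top

theorem hasSum_pow_div_factorial_mul_pow_div_factorial (a b : ℝ) :
    HasSum (fun p : ℕ × ℕ ↦ a ^ p.1 / p.1 ! * (b ^ p.2 / p.2 !)) (exp (a + b)) := by
  have hexp (x : ℝ) : HasSum (fun n : ℕ ↦ x ^ n / (n ! : ℝ)) (exp x) := by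
    rw [Real.exp_eq_exp_ℝ]
    exact NormedSpace.expSeries_div_hasSum_exp x
  have hprod : Summable fun p : ℕ × ℕ ↦ a ^ p.1 / (p.1 ! : ℝ) * (b ^ p.2 / (p.2 ! : ℝ)) :=
    summable_mul_of_summable_norm (f := fun n ↦ a ^ n / (n ! : ℝ)) (g := fun n ↦ b ^ n / (n ! : ℝ))
      (hexp a).summable.norm (hexp b).summable.norm
  rw [exp_add]
  exact (hexp a).mul (hexp b) hprod

/-- `twoPointTerm ρ₁ ρ₂ u v c (l, j) x` is the `(l, j)` term of
`e^{-cx}/x · Σ_l (u x^ρ₁)^l / l! · W_{ρ₂, ρ₁ l}(v x^ρ₂)`, written as a multiple of the gamma kernel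
`x^{s-1} e^{-cx}` with `s = ρ₁ l + ρ₂ j`. -/
noncomputable def twoPointTerm (ρ₁ ρ₂ u v c : ℝ) (p : ℕ × ℕ) (x : ℝ) : ℝ :=
  u ^ p.1 * v ^ p.2 / (p.1 ! * p.2 ! * Gamma (ρ₁ * p.1 + ρ₂ * p.2)) *
    (x ^ (ρ₁ * p.1 + ρ₂ * p.2 - 1) * exp (-(c * x)))

section twoPointTerm

variable {ρ₁ ρ₂ u v c : ℝ}

/-- The `(0, 0)` term vanishes since `Real.Gamma 0 = 0`: this is where the `- e^{-t}` comes from. -/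
lemma twoPointTerm_zero : twoPointTerm ρ₁ ρ₂ u v c 0 = 0 := by
  funext x
  simp [twoPointTerm, Gamma_zero]

lemma mul_fst_add_mul_snd_pos (hρ₁ : 0 < ρ₁) (hρ₂ : 0 < ρ₂) {p : ℕ × ℕ} (hp : p ≠ 0) :
    0 < ρ₁ * p.1 + ρ₂ * p.2 := by
  rcases p with ⟨l, j⟩
  rcases Nat.eq_zero_or_pos l with rfl | hl
  · have hj : 0 < j := Nat.pos_of_ne_zero fun hj ↦ hp (by simp [hj])
    simp only [Nat.cast_zero, mul_zero, zero_add]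
    positivity
  · have : (0 : ℝ) < l := by exact_mod_cast hl
    positivity

lemma integrableOn_twoPointTerm (hρ₁ : 0 < ρ₁) (hρ₂ : 0 < ρ₂) (hc : 0 < c) (p : ℕ × ℕ) :
    IntegrableOn (twoPointTerm ρ₁ ρ₂ u v c p) (Ioi 0) := by
  rcases eq_or_ne p 0 with rfl | hp
  · rw [twoPointTerm_zero]
    exact integrableOn_zero
  · have h := integrableOn_rpow_mul_exp_neg_mul_rpow (p := 1) (s := ρ₁ * p.1 + ρ₂ * p.2 - 1)
      (by linarith [mul_fst_add_mul_snd_pos hρ₁ hρ₂ hp]) one_pos hc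
    simp only [rpow_one, neg_mul] at h
    exact h.const_mul _

lemma integral_twoPointTerm (hρ₁ : 0 < ρ₁) (hρ₂ : 0 < ρ₂) (hc : 0 < c) {p : ℕ × ℕ}
    (hp : p ≠ 0) :
    ∫ x in Ioi 0, twoPointTerm ρ₁ ρ₂ u v c p x =
      (u / c ^ ρ₁) ^ p.1 / p.1 ! * ((v / c ^ ρ₂) ^ p.2 / p.2 !) := by
  have hs := mul_fst_add_mul_snd_pos hρ₁ hρ₂ hp
  have hΓ := (Gamma_pos_of_pos hs).ne'
  simp only [twoPointTerm]
  rw [integral_const_mul, integral_rpow_mul_exp_neg_mul_Ioi hs hc, one_div, inv_rpow hc.le,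
    rpow_add hc, rpow_mul_natCast hc.le, rpow_mul_natCast hc.le, div_pow, div_pow]
  field_simp

lemma hasSum_integral_twoPointTerm (hρ₁ : 0 < ρ₁) (hρ₂ : 0 < ρ₂) (hc : 0 < c) :
    HasSum (fun p ↦ ∫ x in Ioi 0, twoPointTerm ρ₁ ρ₂ u v c p x)
      (exp (u / c ^ ρ₁ + v / c ^ ρ₂) - 1) := by
  have h := hasSum_ite_sub_hasSum
    (hasSum_pow_div_factorial_mul_pow_div_factorial (u / c ^ ρ₁) (v / c ^ ρ₂)) 0
  simp only [Prod.fst_zero, Prod.snd_zero, pow_zero, Nat.factorial_zero, Nat.cast_one, div_one,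
    mul_one] at h
  refine h.congr_fun fun p ↦ ?_
  split_ifs with hp
  · simp [hp, twoPointTerm_zero]
  · exact integral_twoPointTerm hρ₁ hρ₂ hc hp

lemma norm_twoPointTerm (hρ₁ : 0 ≤ ρ₁) (hρ₂ : 0 ≤ ρ₂) (p : ℕ × ℕ) {x : ℝ} (hx : 0 < x) :
    ‖twoPointTerm ρ₁ ρ₂ u v c p x‖ = twoPointTerm ρ₁ ρ₂ |u| |v| c p x := by
  have hΓ : 0 ≤ Gamma (ρ₁ * p.1 + ρ₂ * p.2) := Gamma_nonneg_of_nonneg (by positivity)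
  simp only [twoPointTerm, norm_mul, norm_div, norm_pow, Real.norm_eq_abs, abs_of_nonneg hΓ,
    abs_of_pos (exp_pos _), abs_of_nonneg (rpow_nonneg hx.le _), Nat.abs_cast]

lemma summable_integral_norm_twoPointTerm (hρ₁ : 0 < ρ₁) (hρ₂ : 0 < ρ₂) (hc : 0 < c) :
    Summable fun p ↦ ∫ x in Ioi 0, ‖twoPointTerm ρ₁ ρ₂ u v c p x‖ :=
  (hasSum_integral_twoPointTerm hρ₁ hρ₂ hc).summable.congr fun p ↦
    setIntegral_congr_fun measurableSet_Ioi fun _ hx ↦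
      (norm_twoPointTerm hρ₁.le hρ₂.le p hx).symm

lemma ae_summable_twoPointTerm (hρ₁ : 0 < ρ₁) (hρ₂ : 0 < ρ₂) (hc : 0 < c) :
    ∀ᵐ x ∂volume.restrict (Ioi 0), Summable fun p ↦ twoPointTerm ρ₁ ρ₂ u v c p x :=
  ae_summable_of_summable_integral_norm (integrableOn_twoPointTerm hρ₁ hρ₂ hc)
    (summable_integral_norm_twoPointTerm hρ₁ hρ₂ hc)

theorem integral_tsum_twoPointTerm (hρ₁ : 0 < ρ₁) (hρ₂ : 0 < ρ₂) (hc : 0 < c) :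
    ∫ x in Ioi 0, ∑' p, twoPointTerm ρ₁ ρ₂ u v c p x = exp (u / c ^ ρ₁ + v / c ^ ρ₂) - 1 :=
  (hasSum_integral_of_summable_integral_norm (integrableOn_twoPointTerm hρ₁ hρ₂ hc)
    (summable_integral_norm_twoPointTerm hρ₁ hρ₂ hc)).unique
    (hasSum_integral_twoPointTerm hρ₁ hρ₂ hc)

lemma twoPointTerm_eq {x : ℝ} (hx : 0 < x) (l j : ℕ) :
    twoPointTerm ρ₁ ρ₂ u v c (l, j) x = exp (-(c * x)) / x *
      ((u * x ^ ρ₁) ^ l / l ! * ((v * x ^ ρ₂) ^ j / (j ! * Gamma (ρ₂ * j + ρ₁ * l)))) := by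
  simp only [twoPointTerm]
  rw [rpow_sub_one hx.ne', rpow_add hx, mul_pow, mul_pow, rpow_mul_natCast hx.le,
    rpow_mul_natCast hx.le, add_comm (ρ₂ * _)]
  field_simp

theorem tsum_twoPointTerm {x : ℝ} (hx : 0 < x)
    (hsum : Summable fun p ↦ twoPointTerm ρ₁ ρ₂ u v c p x) :
    ∑' p, twoPointTerm ρ₁ ρ₂ u v c p x = exp (-(c * x)) / x *
      ∑' l : ℕ, (u * x ^ ρ₁) ^ l / l ! * wright ρ₂ (ρ₁ * l) (v * x ^ ρ₂) := by
  rw [hsum.tsum_prod, ← tsum_mul_left]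
  refine tsum_congr fun l ↦ ?_
  simp only [twoPointTerm_eq hx, wright, ← tsum_mul_left]

end twoPointTerm

theorem laplace_two_point_distributed_incomplete_gamma_density_general (k ρ₁ ρ₂ q₁ q₂ t : ℝ)
    (hk : 0 < k) (hρ₁ : 0 < ρ₁) (hρ₁₂ : ρ₁ < ρ₂) (f : ℝ → ℝ → ℝ)
    (hf : ∀ x t : ℝ, f x t = Real.exp (-t - k * x) / x *
      ∑' l : ℕ, (q₁ * k ^ ρ₁ * x ^ ρ₁ * t) ^ l / (Nat.factorial l : ℝ) *
        wright ρ₂ (ρ₁ * l) (q₂ * k ^ ρ₂ * x ^ ρ₂ * t)) :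
    ∀ η : ℝ, 0 < η →
      (∫ x in Set.Ioi (0:ℝ), Real.exp (-η * x) * f x t) =
      Real.exp (-t + (q₁ * k ^ ρ₁ / (η + k) ^ ρ₁ + q₂ * k ^ ρ₂ / (η + k) ^ ρ₂) * t) -
        Real.exp (-t) := by
  intro η hη
  have hρ₂ : 0 < ρ₂ := hρ₁.trans hρ₁₂
  have hc : 0 < η + k := by linarith
  have hpt : ∀ᵐ x ∂volume.restrict (Ioi 0), exp (-η * x) * f x t =
      exp (-t) * ∑' p, twoPointTerm ρ₁ ρ₂ (q₁ * k ^ ρ₁ * t) (q₂ * k ^ ρ₂ * t) (η + k) p x := by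
    filter_upwards [ae_restrict_mem measurableSet_Ioi,
      ae_summable_twoPointTerm (u := q₁ * k ^ ρ₁ * t) (v := q₂ * k ^ ρ₂ * t) hρ₁ hρ₂ hc]
      with x hx hsum
    have hexp :
        exp (-η * x) * (exp (-t - k * x) / x) = exp (-t) * (exp (-((η + k) * x)) / x) := by
      rw [mul_div_assoc', mul_div_assoc', ← exp_add, ← exp_add]
      congr 2
      ring
    rw [tsum_twoPointTerm hx hsum, hf, ← mul_assoc, hexp, mul_assoc]
    simp only [mul_right_comm _ (x ^ ρ₁) t, mul_right_comm _ (x ^ ρ₂) t]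
  rw [integral_congr_ae hpt, integral_const_mul, integral_tsum_twoPointTerm hρ₁ hρ₂ hc,
    mul_sub, mul_one, ← exp_add]
  congr 2
  ring

theorem laplace_two_point_distributed_incomplete_gamma_density (k ρ₁ ρ₂ q₁ q₂ t : ℝ)
    (hk : 0 < k) (hρ₁ : 0 < ρ₁) (hρ₁₂ : ρ₁ < ρ₂) (hρ₂ : ρ₂ < 1)
    (hq₁ : q₁ ∈ Set.Icc (0:ℝ) 1) (hq₂ : q₂ ∈ Set.Icc (0:ℝ) 1) (hq : q₁ + q₂ = 1)
    (ht : 0 ≤ t) (f : ℝ → ℝ → ℝ)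
    (hf : ∀ x t : ℝ, f x t = Real.exp (-t - k * x) / x *
      ∑' l : ℕ, (q₁ * k ^ ρ₁ * x ^ ρ₁ * t) ^ l / (Nat.factorial l : ℝ) *
        wright ρ₂ (ρ₁ * l) (q₂ * k ^ ρ₂ * x ^ ρ₂ * t)) :
    ∀ η : ℝ, 0 < η →
      (∫ x in Set.Ioi (0:ℝ), Real.exp (-η * x) * f x t) =
      Real.exp (-t + (q₁ * k ^ ρ₁ / (η + k) ^ ρ₁ + q₂ * k ^ ρ₂ / (η + k) ^ ρ₂) * t) -
        Real.exp (-t) :=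
  laplace_two_point_distributed_incomplete_gamma_density_general k ρ₁ ρ₂ q₁ q₂ t hk hρ₁ hρ₁₂ f hf
end
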